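/- Define I₂ : ℝ → ℝ → ℝ → ℝ by I₂(q, q', θ) := (1−q)·q'·(sin²θ·Real.logb 2 (sin²θ) + cos²θ·Real.logb 2 (cos²θ / 2)) + q·(1−q')·(cos²θ·Real.logb 2 (cos²θ) + sin²θ·Real.logb 2 (sin²θ / 2)) − q·q'·h₂((1 + sin(2θ))/2) − ξ·Real.logb 2 ξ − 2·η·Real.logb 2 η, where ξ := 1 − q'·cos²θ − q·sin²θ and η := (q'·cos²θ + q·sin²θ)/2. Then I₂(0.9197, 0.9197, π/4) > 1.10. -/

import Mathlib

/-- The binary entropy function (in bits), with the convention `Real.logb 2 0 = 0`. -/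
noncomputable def h2 (x : ℝ) : ℝ := -x * Real.logb 2 x - (1 - x) * Real.logb 2 (1 - x)

/-- Accessible information of the two-sender unassisted protocol with source state
`cos θ|e₁⟩ + sin θ|e₂⟩`, sender 1 blocking with probability 1−q and sender 2 using
the ternary encoding with phase weight q'. -/
noncomputable def I2 (q q' θ : ℝ) : ℝ :=
  (1 - q) * q' * (Real.sin θ ^ 2 * Real.logb 2 (Real.sin θ ^ 2)
      + Real.cos θ ^ 2 * Real.logb 2 (Real.cos θ ^ 2 / 2))
    + q * (1 - q') * (Real.cos θ ^ 2 * Real.logb 2 (Real.cos θ ^ 2)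
      + Real.sin θ ^ 2 * Real.logb 2 (Real.sin θ ^ 2 / 2))
    - q * q' * h2 ((1 + Real.sin (2 * θ)) / 2)
    - (1 - q' * Real.cos θ ^ 2 - q * Real.sin θ ^ 2) *
        Real.logb 2 (1 - q' * Real.cos θ ^ 2 - q * Real.sin θ ^ 2)
    - 2 * ((q' * Real.cos θ ^ 2 + q * Real.sin θ ^ 2) / 2) *
        Real.logb 2 ((q' * Real.cos θ ^ 2 + q * Real.sin θ ^ 2) / 2)

/-!
At `θ = π/4` both `sin² θ` and `cos² θ` equal `1/2`, the phase-encoding term vanishes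
(`h₂ 1 = 0`), and `I₂ q q' (π/4)` collapses to `h₂ s + s - 3/2 ((1-q) q' + q (1-q'))` with
`s = (q + q')/2`. At `q = q' = 0.9197` the claim follows from `h₂ 0.9197 > 0.40186`. The two
logarithms in `h₂ 0.9197` are bounded above by truncating the Mercator series
`-log (1 - t) = ∑ tᵏ/k`, whose terms are positive: at `t = 0.0803` for `log 0.9197`, and at
`t = 0.3576` for `log 0.0803 = log 0.6424 - 3 log 2`.
-/

open Real Finset

theorem log_one_sub_le_neg_sum_range {t : ℝ} (h₀ : 0 ≤ t) (h₁ : t < 1) (n : ℕ) :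
    log (1 - t) ≤ -∑ i ∈ range n, t ^ (i + 1) / (i + 1) :=
  le_neg_of_le_neg <| sum_le_hasSum _ (fun i _ => by positivity)
    (hasSum_pow_div_log_of_abs_lt_one (by rwa [abs_of_nonneg h₀]))

theorem h2_eq_binEntropy_div_log_two (x : ℝ) : h2 x = binEntropy x / log 2 := by
  simp only [h2, binEntropy, logb, log_inv]
  ring

theorem mul_logb_div_two (x : ℝ) : x * logb 2 (x / 2) = x * logb 2 x - x := by
  rcases eq_or_ne x 0 with rfl | hx
  · simp
  · rw [logb_div hx two_ne_zero, logb_self_eq_one one_lt_two]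
    ring

theorem I2_pi_div_four (q q' : ℝ) :
    I2 q q' (π / 4) =
      h2 ((q + q') / 2) + (q + q') / 2 - 3 / 2 * ((1 - q) * q' + q * (1 - q')) := by
  have hsin : sin (π / 4) ^ 2 = 1 / 2 := by
    rw [sin_pi_div_four, div_pow, sq_sqrt zero_le_two]; norm_num
  have hcos : cos (π / 4) ^ 2 = 1 / 2 := by
    rw [cos_pi_div_four, div_pow, sq_sqrt zero_le_two]; norm_num
  have hsin_two : sin (2 * (π / 4)) = 1 := by
    rw [show 2 * (π / 4) = π / 2 by ring, sin_pi_div_two]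
  have hhalf : logb 2 (1 / 2) = -1 := by
    rw [one_div, logb_inv, logb_self_eq_one one_lt_two]
  have hquarter : logb 2 (1 / 2 / 2) = -2 := by
    rw [show (1 / 2 / 2 : ℝ) = (2 ^ 2)⁻¹ by norm_num, logb_inv, logb_pow,
      logb_self_eq_one one_lt_two]
    norm_num
  have h2_one : h2 ((1 + 1) / 2) = 0 := by norm_num [h2]
  have hξ : 1 - q' * (1 / 2) - q * (1 / 2) = 1 - (q + q') / 2 := by ring
  have hη : (q' * (1 / 2) + q * (1 / 2)) / 2 = (q + q') / 2 / 2 := by ring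
  rw [I2, hsin, hcos, hsin_two, h2_one, hhalf, hquarter, hξ, hη, h2]
  linear_combination (-1) * mul_logb_div_two ((q + q') / 2)

theorem binEntropy_0_9197_gt : 0.2786 < binEntropy 0.9197 := by
  have hlog_p : log 0.9197 ≤ -0.0836966 := by
    have h := log_one_sub_le_neg_sum_range (t := 0.0803) (by norm_num) (by norm_num) 3
    norm_num [sum_range_succ] at h
    linarith
  have hlog_one_sub_p : log 0.0803 ≤ -0.4420 - 3 * log 2 := by
    have h := log_one_sub_le_neg_sum_range (t := 0.3576) (by norm_num) (by norm_num) 5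
    norm_num [sum_range_succ] at h
    rw [show (0.0803 : ℝ) = 0.6424 / 2 ^ 3 by norm_num, log_div (by norm_num) (by norm_num),
      log_pow]
    linarith
  have := log_two_gt_d9
  rw [binEntropy, log_inv, log_inv]
  norm_num
  linarith

theorem h2_0_9197_gt : 0.4019 < h2 0.9197 := by
  rw [h2_eq_binEntropy_div_log_two, lt_div_iff₀ (log_pos one_lt_two)]
  linarith [binEntropy_0_9197_gt, log_two_lt_d9]

/-- The two-sender unassisted protocol at the optimal parameters
`q = q' = 0.9197`, `θ = π/4` beats the classical 1-bit limit: `R(𝒬₂) ≥ 1.1014 > 1.10`. -/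
theorem two_sender_unassisted_beats_one_bit :
    I2 0.9197 0.9197 (Real.pi / 4) > 1.10 := by
  rw [I2_pi_div_four]
  norm_num
  linarith [h2_0_9197_gt]
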